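/- Let X, Y be Banach spaces, Q a continuous k-homogeneous polynomial from X to Y with ‖Q‖ = 1. Suppose that ⋂{ker T : T ∈ L(Y), v(T) = 0} = {0}. Then n_Q^{(k)}(X, Y) = 0. -/

import Mathlib

/-!
Choose `x₀` in the unit ball with `Q x₀ ≠ 0` and an operator `T` with `v(T) = 0` and
`T (Q x₀) ≠ 0`; the norm-one polynomial `P = ‖T ∘ Q‖⁻¹ • (T ∘ Q)` then has `v_Q(P) = 0`.
This rests on the estimate `‖f (T y)‖ ≤ 2 ‖T‖ √δ` whenever `‖y‖ ≤ 1`, `‖f‖ = 1` and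
`Re f y > 1 - δ`. To prove it, test `w = y + a • T y` against a norming functional `g` of `w`:
as `v(T) = 0`, `g` kills `T w`, so `‖w‖ = g y - a² g (T (T y)) ≤ 1 + ‖a‖² ‖T‖²`, while for `a`
of modulus `t` and suitable phase `‖w‖ ≥ Re f w > 1 - δ + t ‖f (T y)‖`; take `t = √δ / ‖T‖`.
-/

noncomputable section

/-- `P : X → Y` is a continuous `k`-homogeneous polynomial: it is given by a continuous
`k`-linear map evaluated on the diagonal. -/
def IsHomPoly (𝕜 : Type*) [RCLike 𝕜] {X Y : Type*} [NormedAddCommGroup X] [NormedSpace 𝕜 X]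
    [NormedAddCommGroup Y] [NormedSpace 𝕜 Y] (k : ℕ) (P : X → Y) : Prop :=
  ∃ A : ContinuousMultilinearMap 𝕜 (fun _ : Fin k => X) Y, ∀ x, P x = A (fun _ => x)

/-- The norm of a polynomial: the supremum of `‖P x‖` over the closed unit ball. -/
def polyNorm {X Y : Type*} [NormedAddCommGroup X] [NormedAddCommGroup Y] (P : X → Y) : ℝ :=
  sSup { r : ℝ | ∃ x : X, ‖x‖ ≤ 1 ∧ r = ‖P x‖ }

/-- `v_{Q,δ}(P)`. -/
def vQdelta (𝕜 : Type*) [RCLike 𝕜] {X Y : Type*} [NormedAddCommGroup X] [NormedSpace 𝕜 X]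
    [NormedAddCommGroup Y] [NormedSpace 𝕜 Y] (Q P : X → Y) (δ : ℝ) : ℝ :=
  sSup { r : ℝ | ∃ (x : X) (f : Y →L[𝕜] 𝕜), ‖x‖ = 1 ∧ ‖f‖ = 1 ∧
    1 - δ < RCLike.re (f (Q x)) ∧ r = ‖f (P x)‖ }

/-- The numerical radius of `P` with respect to `Q`, as `inf_{δ>0} v_{Q,δ}(P)`. -/
def numRad (𝕜 : Type*) [RCLike 𝕜] {X Y : Type*} [NormedAddCommGroup X] [NormedSpace 𝕜 X]
    [NormedAddCommGroup Y] [NormedSpace 𝕜 Y] (Q P : X → Y) : ℝ :=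
  sInf { r : ℝ | ∃ δ : ℝ, 0 < δ ∧ r = vQdelta 𝕜 Q P δ }

/-- The approximated spatial numerical range `V_Q(P)`. -/
def VQ (𝕜 : Type*) [RCLike 𝕜] {X Y : Type*} [NormedAddCommGroup X] [NormedSpace 𝕜 X]
    [NormedAddCommGroup Y] [NormedSpace 𝕜 Y] (Q P : X → Y) : Set 𝕜 :=
  ⋂ δ ∈ Set.Ioi (0 : ℝ), closure { z : 𝕜 | ∃ (x : X) (f : Y →L[𝕜] 𝕜), ‖x‖ = 1 ∧ ‖f‖ = 1 ∧
    1 - δ < RCLike.re (f (Q x)) ∧ z = f (P x) }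

/-- The polynomial numerical index `n_Q^{(k)}(X,Y)`. -/
def polyIndex (𝕜 : Type*) [RCLike 𝕜] {X Y : Type*} [NormedAddCommGroup X] [NormedSpace 𝕜 X]
    [NormedAddCommGroup Y] [NormedSpace 𝕜 Y] (k : ℕ) (Q : X → Y) : ℝ :=
  sInf { r : ℝ | ∃ P : X → Y, IsHomPoly 𝕜 k P ∧ polyNorm P = 1 ∧ r = numRad 𝕜 Q P }

/-- The classical numerical radius of a bounded linear operator. -/
def numRadOp (𝕜 : Type*) [RCLike 𝕜] {Y : Type*} [NormedAddCommGroup Y] [NormedSpace 𝕜 Y]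
    (T : Y →L[𝕜] Y) : ℝ :=
  sSup { r : ℝ | ∃ (y : Y) (f : Y →L[𝕜] 𝕜), ‖y‖ = 1 ∧ ‖f‖ = 1 ∧ f y = 1 ∧ r = ‖f (T y)‖ }

end

section Polynomials

variable {𝕜 X Y : Type*} [RCLike 𝕜] [NormedAddCommGroup X] [NormedSpace 𝕜 X]
  [NormedAddCommGroup Y] [NormedSpace 𝕜 Y]

theorem IsHomPoly.bddAbove {k : ℕ} {P : X → Y} (hP : IsHomPoly 𝕜 k P) :
    BddAbove { r : ℝ | ∃ x : X, ‖x‖ ≤ 1 ∧ r = ‖P x‖ } := by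
  obtain ⟨A, hA⟩ := hP
  refine ⟨‖A‖, ?_⟩
  rintro r ⟨x, hx, rfl⟩
  calc ‖P x‖ = ‖A (fun _ => x)‖ := by rw [hA]
    _ ≤ ‖A‖ * ∏ _i : Fin k, ‖x‖ := A.le_opNorm _
    _ ≤ ‖A‖ * 1 := by
        gcongr
        exact Finset.prod_le_one (fun _ _ => norm_nonneg x) (fun _ _ => hx)
    _ = ‖A‖ := mul_one _

theorem IsHomPoly.norm_le_polyNorm {k : ℕ} {P : X → Y} (hP : IsHomPoly 𝕜 k P) {x : X}
    (hx : ‖x‖ ≤ 1) : ‖P x‖ ≤ polyNorm P :=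
  le_csSup hP.bddAbove ⟨x, hx, rfl⟩

theorem IsHomPoly.const_smul {k : ℕ} {P : X → Y} (hP : IsHomPoly 𝕜 k P) (c : 𝕜) :
    IsHomPoly 𝕜 k (c • P) := by
  obtain ⟨A, hA⟩ := hP
  exact ⟨c • A, fun x => by simp [hA x]⟩

theorem IsHomPoly.continuousLinearMap_comp {Z : Type*} [NormedAddCommGroup Z] [NormedSpace 𝕜 Z]
    {k : ℕ} {P : X → Y} (hP : IsHomPoly 𝕜 k P) (T : Y →L[𝕜] Z) :
    IsHomPoly 𝕜 k (fun x => T (P x)) := by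
  obtain ⟨A, hA⟩ := hP
  exact ⟨T.compContinuousMultilinearMap A, fun x => by simp [hA x]⟩

end Polynomials

theorem polyNorm_smul {𝕜 X Y : Type*} [RCLike 𝕜] [NormedAddCommGroup X] [NormedAddCommGroup Y]
    [NormedSpace 𝕜 Y] (c : 𝕜) (P : X → Y) : polyNorm (c • P) = ‖c‖ * polyNorm P := by
  unfold polyNorm
  rw [← smul_eq_mul, ← Real.sSup_smul_of_nonneg (norm_nonneg c)]
  congr 1
  ext r
  simp [Set.mem_smul_set, norm_smul, eq_comm]

theorem exists_norm_le_one_apply_ne_zero {X Y : Type*} [NormedAddCommGroup X]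
    [NormedAddCommGroup Y] {P : X → Y} (hP : polyNorm P ≠ 0) : ∃ x, ‖x‖ ≤ 1 ∧ P x ≠ 0 := by
  by_contra! h
  apply hP
  have hset : { r : ℝ | ∃ x : X, ‖x‖ ≤ 1 ∧ r = ‖P x‖ } = {0} := by
    ext r
    constructor
    · rintro ⟨x, hx, rfl⟩
      simp [h x hx]
    · rintro rfl
      exact ⟨0, by simp, by simp [h 0 (by simp)]⟩
  rw [polyNorm, hset, csSup_singleton]

section NumericalRadius

variable {𝕜 X Y : Type*} [RCLike 𝕜] [NormedAddCommGroup X] [NormedSpace 𝕜 X]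
  [NormedAddCommGroup Y] [NormedSpace 𝕜 Y]

theorem vQdelta_nonneg (Q P : X → Y) (δ : ℝ) : 0 ≤ vQdelta 𝕜 Q P δ :=
  Real.sSup_nonneg (by rintro r ⟨x, f, -, -, -, rfl⟩; exact norm_nonneg _)

theorem numRad_nonneg (Q P : X → Y) : 0 ≤ numRad 𝕜 Q P :=
  Real.sInf_nonneg (by rintro r ⟨δ, -, rfl⟩; exact vQdelta_nonneg Q P δ)

theorem numRad_le_vQdelta (Q P : X → Y) {δ : ℝ} (hδ : 0 < δ) :
    numRad 𝕜 Q P ≤ vQdelta 𝕜 Q P δ :=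
  csInf_le ⟨0, by rintro r ⟨δ, -, rfl⟩; exact vQdelta_nonneg Q P δ⟩ ⟨δ, hδ, rfl⟩

theorem numRad_eq_zero_of_le_mul_sqrt {Q P : X → Y} {K : ℝ} (hK : 0 ≤ K)
    (h : ∀ δ > 0, ∀ (x : X) (f : Y →L[𝕜] 𝕜), ‖x‖ = 1 → ‖f‖ = 1 →
      1 - δ < RCLike.re (f (Q x)) → ‖f (P x)‖ ≤ K * √δ) :
    numRad 𝕜 Q P = 0 := by
  refine le_antisymm (le_of_forall_pos_le_add fun ε hε => ?_) (numRad_nonneg Q P)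
  set δ := (ε / (K + 1)) ^ 2
  have hδ : 0 < δ := by positivity
  have hvQ : vQdelta 𝕜 Q P δ ≤ K * √δ :=
    Real.sSup_le (by rintro r ⟨x, f, hx, hf, hre, rfl⟩; exact h δ hδ x f hx hf hre)
      (by positivity)
  have hKδ : K * √δ ≤ ε := by
    rw [Real.sqrt_sq (by positivity), mul_div_assoc']
    exact div_le_of_le_mul₀ (by positivity) hε.le (by nlinarith)
  linarith [numRad_le_vQdelta (𝕜 := 𝕜) Q P hδ]

theorem polyIndex_nonneg (k : ℕ) (Q : X → Y) : 0 ≤ polyIndex 𝕜 k Q :=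
  Real.sInf_nonneg (by rintro r ⟨P, -, -, rfl⟩; exact numRad_nonneg Q P)

theorem polyIndex_le_numRad {k : ℕ} (Q : X → Y) {P : X → Y} (hP : IsHomPoly 𝕜 k P)
    (hP1 : polyNorm P = 1) : polyIndex 𝕜 k Q ≤ numRad 𝕜 Q P :=
  csInf_le ⟨0, by rintro r ⟨P, -, -, rfl⟩; exact numRad_nonneg Q P⟩ ⟨P, hP, hP1, rfl⟩

end NumericalRadius

section NumericalRadiusZero

variable {𝕜 Y : Type*} [RCLike 𝕜] [NormedAddCommGroup Y] [NormedSpace 𝕜 Y]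

theorem norm_apply_apply_le_numRadOp (T : Y →L[𝕜] Y) {y : Y} {f : Y →L[𝕜] 𝕜} (hy : ‖y‖ = 1)
    (hf : ‖f‖ = 1) (hfy : f y = 1) : ‖f (T y)‖ ≤ numRadOp 𝕜 T := by
  refine le_csSup ⟨‖T‖, ?_⟩ ⟨y, f, hy, hf, hfy, rfl⟩
  rintro r ⟨y, f, hy, hf, -, rfl⟩
  calc ‖f (T y)‖ ≤ ‖f‖ * ‖T y‖ := f.le_opNorm _
    _ ≤ 1 * (‖T‖ * ‖y‖) := by rw [hf]; gcongr; exact T.le_opNorm _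
    _ = ‖T‖ := by rw [hy, one_mul, mul_one]

variable {T : Y →L[𝕜] Y}

theorem apply_apply_eq_zero_of_numRadOp_eq_zero (hT : numRadOp 𝕜 T = 0) {w : Y}
    {g : Y →L[𝕜] 𝕜} (hg : ‖g‖ = 1) (hgw : g w = ‖w‖) : g (T w) = 0 := by
  rcases eq_or_ne w 0 with rfl | hw
  · simp
  have hw' : (‖w‖ : 𝕜) ≠ 0 := RCLike.ofReal_ne_zero.2 (norm_ne_zero_iff.2 hw)
  set u : Y := (‖w‖ : 𝕜)⁻¹ • w
  have hu : ‖u‖ = 1 := by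
    rw [norm_smul, norm_inv, RCLike.norm_ofReal, abs_norm, inv_mul_cancel₀ (norm_ne_zero_iff.2 hw)]
  have hgu : g u = 1 := by rw [map_smul, smul_eq_mul, hgw, inv_mul_cancel₀ hw']
  have hTu : g (T u) = 0 := norm_le_zero_iff.1 (hT ▸ norm_apply_apply_le_numRadOp T hu hg hgu)
  have hwu : w = (‖w‖ : 𝕜) • u := by rw [smul_smul, mul_inv_cancel₀ hw', one_smul]
  rw [hwu, map_smul, map_smul, smul_eq_mul, hTu, mul_zero]

theorem norm_add_smul_apply_le (hT : numRadOp 𝕜 T = 0) {y : Y} (hy : ‖y‖ ≤ 1) (a : 𝕜) :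
    ‖y + a • T y‖ ≤ 1 + ‖a‖ ^ 2 * ‖T‖ ^ 2 := by
  set w := y + a • T y
  rcases eq_or_ne w 0 with hw | hw
  · rw [hw, norm_zero]; positivity
  obtain ⟨g, hg, hgw⟩ := exists_dual_vector 𝕜 w (norm_ne_zero_iff.2 hw)
  have hgTw : g (T w) = 0 := apply_apply_eq_zero_of_numRadOp_eq_zero hT hg hgw
  have hgy : ‖g y‖ ≤ 1 := (g.le_opNorm y).trans (by rw [hg, one_mul]; exact hy)
  have hgTTy : ‖g (T (T y))‖ ≤ ‖T‖ ^ 2 :=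
    calc ‖g (T (T y))‖ ≤ ‖g‖ * (‖T‖ * (‖T‖ * ‖y‖)) :=
          (g.le_opNorm _).trans (by gcongr; exact T.le_opNorm_of_le (T.le_opNorm_of_le le_rfl))
      _ ≤ 1 * (‖T‖ * (‖T‖ * 1)) := by rw [hg]; gcongr
      _ = ‖T‖ ^ 2 := by ring
  have hnorm : (‖w‖ : 𝕜) = g y - a ^ 2 * g (T (T y)) := by
    simp only [w, map_add, map_smul, smul_eq_mul] at hgTw
    rw [← hgw]
    simp only [w, map_add, map_smul, smul_eq_mul]
    linear_combination a * hgTw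
  calc ‖w‖ = ‖g y - a ^ 2 * g (T (T y))‖ := by rw [← hnorm, RCLike.norm_ofReal, abs_norm]
    _ ≤ ‖g y‖ + ‖a‖ ^ 2 * ‖g (T (T y))‖ := by rw [← norm_pow, ← norm_mul]; exact norm_sub_le _ _
    _ ≤ 1 + ‖a‖ ^ 2 * ‖T‖ ^ 2 := by gcongr

theorem mul_norm_apply_apply_lt (hT : numRadOp 𝕜 T = 0) {y : Y} (hy : ‖y‖ ≤ 1)
    {f : Y →L[𝕜] 𝕜} (hf : ‖f‖ = 1) {δ : ℝ} (hfy : 1 - δ < RCLike.re (f y)) {t : ℝ}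
    (ht : 0 ≤ t) : t * ‖f (T y)‖ < δ + t ^ 2 * ‖T‖ ^ 2 := by
  set z := f (T y)
  set a : 𝕜 := t * (starRingEnd 𝕜) z / ‖z‖
  have haz : a * z = (t * ‖z‖ : ℝ) := by
    rcases eq_or_ne z 0 with hz | hz
    · simp [a, hz]
    have hz' : (‖z‖ : 𝕜) ≠ 0 := RCLike.ofReal_ne_zero.2 (norm_ne_zero_iff.2 hz)
    rw [show a * z = t * ((starRingEnd 𝕜) z * z) / ‖z‖ by simp only [a]; ring, RCLike.conj_mul]
    push_cast
    field_simp
  have ha : ‖a‖ ≤ t := by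
    simp only [a, norm_div, norm_mul, RCLike.norm_ofReal, RCLike.norm_conj, abs_norm,
      abs_of_nonneg ht, mul_div_assoc]
    exact mul_le_of_le_one_right ht (div_self_le_one _)
  have hfw : RCLike.re (f (y + a • T y)) = RCLike.re (f y) + t * ‖z‖ := by
    rw [map_add, map_smul, smul_eq_mul, haz, map_add, RCLike.ofReal_re]
  have hre_le := calc RCLike.re (f (y + a • T y)) ≤ ‖f (y + a • T y)‖ := RCLike.re_le_norm _
    _ ≤ ‖y + a • T y‖ := (f.le_opNorm _).trans_eq (by rw [hf, one_mul])
    _ ≤ 1 + ‖a‖ ^ 2 * ‖T‖ ^ 2 := norm_add_smul_apply_le hT hy a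
    _ ≤ 1 + t ^ 2 * ‖T‖ ^ 2 := by gcongr
  linarith

theorem norm_apply_apply_le_of_numRadOp_eq_zero (hT : numRadOp 𝕜 T = 0) {y : Y} (hy : ‖y‖ ≤ 1)
    {f : Y →L[𝕜] 𝕜} (hf : ‖f‖ = 1) {δ : ℝ} (hδ : 0 < δ) (hfy : 1 - δ < RCLike.re (f y)) :
    ‖f (T y)‖ ≤ 2 * ‖T‖ * √δ := by
  rcases (norm_nonneg T).eq_or_lt with hT0 | hT0
  · simp [norm_eq_zero.1 hT0.symm]
  have key := mul_norm_apply_apply_lt hT hy hf hfy (div_nonneg (Real.sqrt_nonneg δ) hT0.le)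
  have hsq := Real.sq_sqrt hδ.le
  have hpos := Real.sqrt_pos.2 hδ
  rw [div_pow, div_mul_cancel₀ _ (by positivity), hsq, div_mul_eq_mul_div, div_lt_iff₀ hT0] at key
  nlinarith

end NumericalRadiusZero

theorem numRad_smul_comp_eq_zero {𝕜 X Y : Type*} [RCLike 𝕜] [NormedAddCommGroup X]
    [NormedSpace 𝕜 X] [NormedAddCommGroup Y] [NormedSpace 𝕜 Y] {Q : X → Y}
    (hQ : ∀ x, ‖x‖ = 1 → ‖Q x‖ ≤ 1) {T : Y →L[𝕜] Y} (hT : numRadOp 𝕜 T = 0) (c : 𝕜) :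
    numRad 𝕜 Q (c • fun x => T (Q x)) = 0 := by
  refine numRad_eq_zero_of_le_mul_sqrt (K := ‖c‖ * (2 * ‖T‖)) (by positivity) ?_
  intro δ hδ x f hx hf hre
  rw [Pi.smul_apply, map_smul, norm_smul, mul_assoc]
  gcongr
  exact norm_apply_apply_le_of_numRadOp_eq_zero hT (hQ x hx) hf hδ hre

theorem stmt_15_general (𝕜 : Type*) [RCLike 𝕜] (X Y : Type*) [NormedAddCommGroup X] [NormedSpace 𝕜 X]
    [NormedAddCommGroup Y] [NormedSpace 𝕜 Y]
    (k : ℕ) (Q : X → Y) (hQ : IsHomPoly 𝕜 k Q) (hQ1 : polyNorm Q = 1)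
    (hker : { y : Y | ∀ T : Y →L[𝕜] Y, numRadOp 𝕜 T = 0 → T y = 0 } = {0}) :
    polyIndex 𝕜 k Q = 0 := by
  obtain ⟨x₀, hx₀, hQx₀⟩ := exists_norm_le_one_apply_ne_zero (hQ1.trans_ne one_ne_zero)
  obtain ⟨T, hT, hTQx₀⟩ : ∃ T : Y →L[𝕜] Y, numRadOp 𝕜 T = 0 ∧ T (Q x₀) ≠ 0 := by
    by_contra! h
    exact hQx₀ (hker.subset h)
  set R : X → Y := fun x => T (Q x)
  have hR : IsHomPoly 𝕜 k R := hQ.continuousLinearMap_comp T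
  have hR_pos : 0 < polyNorm R := (norm_pos_iff.2 hTQx₀).trans_le (hR.norm_le_polyNorm hx₀)
  have hP1 : polyNorm ((polyNorm R : 𝕜)⁻¹ • R) = 1 := by
    rw [polyNorm_smul, norm_inv, RCLike.norm_ofReal, abs_of_pos hR_pos, inv_mul_cancel₀ hR_pos.ne']
  refine le_antisymm ?_ (polyIndex_nonneg k Q)
  calc polyIndex 𝕜 k Q ≤ numRad 𝕜 Q ((polyNorm R : 𝕜)⁻¹ • R) :=
        polyIndex_le_numRad Q (hR.const_smul _) hP1
    _ = 0 := numRad_smul_comp_eq_zero (fun x hx => hQ1 ▸ hQ.norm_le_polyNorm hx.le) hT _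

theorem stmt_15 (𝕜 : Type*) [RCLike 𝕜] (X Y : Type*) [NormedAddCommGroup X] [NormedSpace 𝕜 X]
    [NormedAddCommGroup Y] [NormedSpace 𝕜 Y] [CompleteSpace X] [CompleteSpace Y]
    (k : ℕ) (Q : X → Y) (hQ : IsHomPoly 𝕜 k Q) (hQ1 : polyNorm Q = 1)
    (hker : { y : Y | ∀ T : Y →L[𝕜] Y, numRadOp 𝕜 T = 0 → T y = 0 } = {0}) :
    polyIndex 𝕜 k Q = 0 :=
  stmt_15_general 𝕜 X Y k Q hQ hQ1 hker
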